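/- arXiv:2303.08930 — 3 statements merged into one kernel-verified Lean document; each statement's English description precedes it below -/
import Mathlib

section
/- If a hypergraph chain (𝓗_ℓ)_{ℓ∈ℤ} over a base set V has Helly Number h and Colorful Helly Number k ≥ h, then there exists a function β : (0,1) → [0,1) with lim_{α→1} β(α) = 1 such that for every ℓ ∈ ℤ, every finite set S ⊆ V and every α ∈ (0,1): if the number of h-element subsets of S belonging to 𝓗_ℓ is at least α·C(|S|,h), then there exists S' ⊆ S with |S'| ≥ β(α)·|S| and S' ∈ 𝓗_{ℓ+3}. -/
/-- A hypergraph (family of finite subsets of `V`) is downwards closed. -/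
def DownwardsClosed {V : Type*} (H : Set (Finset V)) : Prop :=
  ∀ ⦃A B : Finset V⦄, A ∈ H → B ⊆ A → B ∈ H

/-- A hypergraph chain: a `ℤ`-indexed sequence of downwards closed hypergraphs,
increasing in the index. -/
def HypergraphChain {V : Type*} (H : ℤ → Set (Finset V)) : Prop :=
  (∀ ℓ : ℤ, DownwardsClosed (H ℓ)) ∧ ∀ ℓ : ℤ, H ℓ ⊆ H (ℓ + 1)

/-- A hypergraph chain has Helly Number `h`: for every `ℓ` and every finite
`S ⊆ V`, if every `h`-element subset of `S` belongs to `H ℓ`, then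
`S ∈ H (ℓ + 1)`. -/
def HasHellyNumber {V : Type*} (H : ℤ → Set (Finset V)) (h : ℕ) : Prop :=
  ∀ ℓ : ℤ, ∀ S : Finset V, (∀ T ⊆ S, T.card = h → T ∈ H ℓ) → S ∈ H (ℓ + 1)

/-- A hypergraph chain has Colorful Helly Number `k`: for every `ℓ` and all
color classes `S 0, …, S (k-1)`, if every colorful selection (the image of a map
`φ : Fin k → V` with `φ i ∈ S i` for all `i`) is an edge of `H ℓ`, then some
color class is an edge of `H (ℓ + 1)`. -/
def HasColorfulHellyNumber {V : Type*} [DecidableEq V] (H : ℤ → Set (Finset V)) (k : ℕ) : Prop :=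
  ∀ ℓ : ℤ, ∀ S : Fin k → Finset V,
    (∀ φ : Fin k → V, (∀ i, φ i ∈ S i) → Finset.image φ Finset.univ ∈ H ℓ) →
    ∃ j : Fin k, S j ∈ H (ℓ + 1)

/-!
Put `γ = (1 - α)^(1/(k+1))` and suppose no subset of `S` with at least `(1 - (k+1)² γ) n` elements
lies in `H (ℓ + 3)`. Colorful Helly with all classes equal to such a subset yields inside it a set
of at most `k` elements outside `H (ℓ + 2)`; removing these greedily gives `t = k + ⌊2nγ⌋`
pairwise disjoint ones. For each `k` of them, colorful Helly gives a rainbow `k`-set outside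
`H (ℓ + 1)`, and Helly an `h`-subset of it outside `H ℓ`. The rainbow set determines the classes it
meets, so `C(t, k) ≤ #bad · C(n, k - h)`. Since `k! C(t, k) ≥ (t + 1 - k)^k > (2nγ)^k` and
`k! C(n, h) C(n, k - h) ≤ (2n)^k`, this contradicts `#bad ≤ (1 - α) C(n, h) ≤ γ^k C(n, h)`.
-/

open Finset Filter Function Topology
open scoped Nat

section Greedy

variable {α : Type*} [DecidableEq α]

lemma exists_pairwise_disjoint_subsets {P : Finset α → Prop} {S : Finset α} {k t : ℕ}
    (hP : ∀ R ⊆ S, #S ≤ #R + k * t → ∃ B ⊆ R, #B ≤ k ∧ P B) :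
    ∃ Bs : Fin t → Finset α, (∀ i, Bs i ⊆ S) ∧ (∀ i, #(Bs i) ≤ k) ∧ (∀ i, P (Bs i)) ∧
      Pairwise (Disjoint on Bs) := by
  induction t with
  | zero => exact ⟨Fin.elim0, nofun, nofun, nofun, nofun⟩
  | succ t ih =>
    obtain ⟨Bs, hBsS, hBsk, hBsP, hdisj⟩ :=
      ih fun R hRS hR => hP R hRS (hR.trans (by gcongr; omega))
    set U := univ.biUnion Bs
    have hU : #U ≤ k * t := by
      simpa [mul_comm] using card_biUnion_le_card_mul univ Bs k fun i _ => hBsk i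
    obtain ⟨B, hBU, hBk, hBP⟩ := hP (S \ U) sdiff_subset (by
      have := card_le_card_sdiff_add_card (s := S) (t := U)
      rw [mul_add_one]; omega)
    have hBdisj (i : Fin t) : Disjoint B (Bs i) :=
      sdiff_disjoint.mono hBU (subset_biUnion_of_mem Bs (mem_univ i))
    refine ⟨Fin.cons B Bs, Fin.forall_fin_succ.2 ⟨hBU.trans sdiff_subset, hBsS⟩,
      Fin.forall_fin_succ.2 ⟨hBk, hBsk⟩, Fin.forall_fin_succ.2 ⟨hBP, hBsP⟩, ?_⟩
    intro i j hij
    cases i using Fin.cases <;> cases j using Fin.cases <;>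
      simp only [onFun, Fin.cons_zero, Fin.cons_succ]
    · exact absurd rfl hij
    · exact hBdisj _
    · exact (hBdisj _).symm
    · exact hdisj (ne_of_apply_ne Fin.succ hij)

end Greedy

lemma card_filter_exists_subset_le {α : Type*} [DecidableEq α] (S : Finset α)
    (F : Finset (Finset α)) {h k : ℕ} (hF : ∀ T ∈ F, #T = h) :
    #{D ∈ S.powersetCard k | ∃ T ∈ F, T ⊆ D} ≤ #F * (#S).choose (k - h) := by
  have hT : ∀ D ∈ {D ∈ S.powersetCard k | ∃ T ∈ F, T ⊆ D}, ∃ T ∈ F, T ⊆ D :=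
    fun D hD => (mem_filter.1 hD).2
  choose! T hTF hTD using hT
  calc #{D ∈ S.powersetCard k | ∃ T ∈ F, T ⊆ D}
      ≤ #(F ×ˢ S.powersetCard (k - h)) := by
        refine card_le_card_of_injOn (fun D => (T D, D \ T D)) (fun D hD => ?_) ?_
        · obtain ⟨hDS, hDk⟩ := mem_powersetCard.1 (mem_filter.1 hD).1
          simp only [coe_product, Set.mem_prod, mem_coe, mem_powersetCard]
          refine ⟨hTF D hD, sdiff_subset.trans hDS, ?_⟩
          rw [card_sdiff_of_subset (hTD D hD), hDk, hF _ (hTF D hD)]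
        · intro D₁ hD₁ D₂ hD₂ he
          simp only [Prod.mk.injEq] at he
          calc D₁ = T D₁ ∪ D₁ \ T D₁ := (union_sdiff_of_subset (hTD D₁ hD₁)).symm
            _ = T D₂ ∪ D₂ \ T D₂ := by rw [he.2, he.1]
            _ = D₂ := union_sdiff_of_subset (hTD D₂ hD₂)
    _ = #F * (#S).choose (k - h) := by rw [card_product, card_powersetCard]

lemma mem_iff_inter_nonempty_of_subset_biUnion {ι V : Type*} [DecidableEq V] {Bs : ι → Finset V}
    (hdisj : Pairwise (Disjoint on Bs)) {J : Finset ι} {D : Finset V} (hD : D ⊆ J.biUnion Bs)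
    (hJ : ∀ j ∈ J, (D ∩ Bs j).Nonempty) {j : ι} : j ∈ J ↔ (D ∩ Bs j).Nonempty := by
  refine ⟨hJ j, fun ⟨x, hx⟩ => ?_⟩
  obtain ⟨hxD, hxj⟩ := mem_inter.1 hx
  obtain ⟨j', hj'J, hxj'⟩ := mem_biUnion.1 (hD hxD)
  by_contra hjJ
  exact disjoint_left.1 (hdisj (by rintro rfl; exact hjJ hj'J)) hxj' hxj

lemma factorial_mul_choose_mul_choose_le {h k : ℕ} (hhk : h ≤ k) (n : ℕ) :
    k ! * n.choose h * n.choose (k - h) ≤ 2 ^ k * n ^ k := by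
  have hpow (m : ℕ) : m ! * n.choose m ≤ n ^ m := by
    rw [← Nat.descFactorial_eq_factorial_mul_choose]
    exact Nat.descFactorial_le_pow n m
  calc k ! * n.choose h * n.choose (k - h)
      = k.choose h * (h ! * n.choose h) * ((k - h)! * n.choose (k - h)) := by
        rw [← Nat.choose_mul_factorial_mul_factorial hhk]; ring
    _ ≤ 2 ^ k * n ^ h * n ^ (k - h) := by
        gcongr
        · exact Nat.choose_le_two_pow k h
        · exact hpow h
        · exact hpow (k - h)
    _ = 2 ^ k * n ^ k := by rw [mul_assoc, ← pow_add, Nat.add_sub_cancel' hhk]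

lemma pow_le_factorial_mul_choose_add (k c : ℕ) : (c + 1) ^ k ≤ k ! * (k + c).choose k := by
  rw [← Nat.descFactorial_eq_factorial_mul_choose]
  have := Nat.pow_sub_le_descFactorial (k + c) k
  rwa [add_assoc, Nat.add_sub_cancel_left] at this

lemma mul_choose_lt_choose_add {h k n b c : ℕ} {γ : ℝ} (hhk : h ≤ k) (hk : k ≠ 0) (hγ : 0 ≤ γ)
    (hb : (b : ℝ) ≤ γ ^ k * n.choose h) (hc : 2 * n * γ < c + 1) :
    b * n.choose (k - h) < (k + c).choose k := by
  have key : (k ! : ℝ) * (b * n.choose (k - h)) < k ! * (k + c).choose k :=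
    calc (k ! : ℝ) * (b * n.choose (k - h))
        = k ! * n.choose (k - h) * b := by ring
      _ ≤ k ! * n.choose (k - h) * (γ ^ k * n.choose h) := by gcongr
      _ = γ ^ k * (k ! * n.choose h * n.choose (k - h) : ℕ) := by push_cast; ring
      _ ≤ γ ^ k * (2 ^ k * n ^ k : ℕ) :=
          mul_le_mul_of_nonneg_left (by exact_mod_cast factorial_mul_choose_mul_choose_le hhk n)
            (by positivity)
      _ = (2 * n * γ) ^ k := by push_cast; ring
      _ < (c + 1) ^ k := pow_lt_pow_left₀ hc (by positivity) hk
      _ ≤ k ! * (k + c).choose k := by exact_mod_cast pow_le_factorial_mul_choose_add k c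
  exact_mod_cast lt_of_mul_lt_mul_left key (by positivity)

section Hypergraphs

variable {V : Type*}

open Classical in
noncomputable def nonEdges (H : Set (Finset V)) (S : Finset V) (h : ℕ) : Finset (Finset V) :=
  {T ∈ S.powersetCard h | T ∉ H}

lemma mem_nonEdges {H : Set (Finset V)} {S T : Finset V} {h : ℕ} :
    T ∈ nonEdges H S h ↔ (T ⊆ S ∧ #T = h) ∧ T ∉ H := by
  simp [nonEdges]

lemma ncard_add_card_nonEdges (H : Set (Finset V)) (S : Finset V) (h : ℕ) :
    ({T | T ⊆ S ∧ #T = h ∧ T ∈ H} : Set (Finset V)).ncard + #(nonEdges H S h) =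
      (#S).choose h := by
  classical
  have hedges : {T | T ⊆ S ∧ #T = h ∧ T ∈ H} = ↑{T ∈ S.powersetCard h | T ∈ H} := by
    ext; simp [and_assoc]
  rw [hedges, Set.ncard_coe_finset, nonEdges, card_filter_add_card_filter_not, card_powersetCard]

variable {H : ℤ → Set (Finset V)} {h k : ℕ} {ℓ : ℤ}

lemma HasHellyNumber.exists_subset_notMem (hHelly : HasHellyNumber H h) {D : Finset V}
    (hD : D ∉ H (ℓ + 1)) : ∃ T ⊆ D, #T = h ∧ T ∉ H ℓ := by
  by_contra! hall
  exact hD (hHelly ℓ D hall)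

variable [DecidableEq V]

namespace HasColorfulHellyNumber

lemma exists_selection_notMem (hCH : HasColorfulHellyNumber H k) (S : Fin k → Finset V)
    (hS : ∀ j, S j ∉ H (ℓ + 1)) : ∃ f : Fin k → V, (∀ i, f i ∈ S i) ∧ image f univ ∉ H ℓ := by
  by_contra! hall
  obtain ⟨j, hj⟩ := hCH ℓ S hall
  exact hS j hj

lemma exists_subset_card_le_notMem (hCH : HasColorfulHellyNumber H k) {R : Finset V}
    (hR : R ∉ H (ℓ + 1)) : ∃ B ⊆ R, #B ≤ k ∧ B ∉ H ℓ := by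
  obtain ⟨f, hf, hfH⟩ := hCH.exists_selection_notMem (fun _ => R) fun _ => hR
  exact ⟨image f univ, image_subset_iff.2 fun i _ => hf i, card_image_le.trans (by simp), hfH⟩

lemma exists_rainbow_notMem (hCH : HasColorfulHellyNumber H k) {ι : Type*} {Bs : ι → Finset V}
    (hdisj : Pairwise (Disjoint on Bs)) {J : Finset ι} (hJ : #J = k)
    (hBs : ∀ j ∈ J, Bs j ∉ H (ℓ + 1)) :
    ∃ D ⊆ J.biUnion Bs, #D = k ∧ D ∉ H ℓ ∧ ∀ j ∈ J, (D ∩ Bs j).Nonempty := by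
  let σ : Fin k ≃ J := (J.equivFinOfCardEq hJ).symm
  obtain ⟨f, hf, hfH⟩ :=
    hCH.exists_selection_notMem (fun i => Bs (σ i)) fun i => hBs _ (σ i).2
  have hfinj : Injective f := by
    intro i i' he
    by_contra hne
    have hσ : (σ i : ι) ≠ σ i' := fun e => hne (σ.injective (Subtype.ext e))
    exact disjoint_left.1 (hdisj hσ) (hf i) (he ▸ hf i')
  refine ⟨image f univ, image_subset_iff.2 fun i _ => mem_biUnion.2 ⟨σ i, (σ i).2, hf i⟩,
    by rw [card_image_of_injective _ hfinj, card_univ, Fintype.card_fin], hfH, fun j hj => ?_⟩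
  obtain ⟨i, hi⟩ := σ.surjective ⟨j, hj⟩
  exact ⟨f i, mem_inter.2 ⟨mem_image_of_mem _ (mem_univ i), by simpa [hi] using hf i⟩⟩

end HasColorfulHellyNumber

lemma choose_le_card_nonEdges_mul_choose (hHelly : HasHellyNumber H h)
    (hCH : HasColorfulHellyNumber H k) {S : Finset V} {t : ℕ} {Bs : Fin t → Finset V}
    (hBsS : ∀ i, Bs i ⊆ S) (hBs : ∀ i, Bs i ∉ H (ℓ + 1 + 1))
    (hdisj : Pairwise (Disjoint on Bs)) :
    t.choose k ≤ #(nonEdges (H ℓ) S h) * (#S).choose (k - h) := by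
  have hD : ∀ J ∈ (univ : Finset (Fin t)).powersetCard k, ∃ D ⊆ J.biUnion Bs,
      #D = k ∧ D ∉ H (ℓ + 1) ∧ ∀ j ∈ J, (D ∩ Bs j).Nonempty :=
    fun J hJ => hCH.exists_rainbow_notMem hdisj (mem_powersetCard.1 hJ).2 fun j _ => hBs j
  choose! D hDJ hDk hDH hDmeet using hD
  calc t.choose k = #((univ : Finset (Fin t)).powersetCard k) := by simp
    _ ≤ #{D ∈ S.powersetCard k | ∃ T ∈ nonEdges (H ℓ) S h, T ⊆ D} := by
        refine card_le_card_of_injOn D (fun J hJ => ?_) fun J₁ hJ₁ J₂ hJ₂ he => ?_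
        · obtain ⟨T, hTD, hTh, hTH⟩ := hHelly.exists_subset_notMem (hDH J hJ)
          have hDS : D J ⊆ S := (hDJ J hJ).trans (biUnion_subset.2 fun i _ => hBsS i)
          simp only [mem_coe, mem_filter, mem_powersetCard]
          exact ⟨⟨hDS, hDk J hJ⟩, T, mem_nonEdges.2 ⟨⟨hTD.trans hDS, hTh⟩, hTH⟩, hTD⟩
        · ext j
          rw [mem_iff_inter_nonempty_of_subset_biUnion hdisj (hDJ J₁ hJ₁) (hDmeet J₁ hJ₁),
            mem_iff_inter_nonempty_of_subset_biUnion hdisj (hDJ J₂ hJ₂) (hDmeet J₂ hJ₂), he]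
    _ ≤ #(nonEdges (H ℓ) S h) * (#S).choose (k - h) :=
        card_filter_exists_subset_le S _ fun _ hT => (mem_nonEdges.1 hT).1.2

lemma exists_large_mem_of_card_nonEdges_le (hHelly : HasHellyNumber H h)
    (hCH : HasColorfulHellyNumber H k) (hhk : h ≤ k) (hk : k ≠ 0) {S : Finset V} {γ : ℝ}
    (hγ : 0 ≤ γ) (hSγ : 1 ≤ #S * γ) (hbad : (#(nonEdges (H ℓ) S h) : ℝ) ≤ γ ^ k * (#S).choose h) :
    ∃ S' ⊆ S, (1 - (k + 1) ^ 2 * γ) * #S ≤ #S' ∧ S' ∈ H (ℓ + 3) := by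
  by_contra! hfail
  set c := ⌊2 * #S * γ⌋₊
  have hc : (c : ℝ) ≤ 2 * #S * γ := Nat.floor_le (by positivity)
  have hsmall : ∀ R ⊆ S, #S ≤ #R + k * (k + c) → ∃ B ⊆ R, #B ≤ k ∧ B ∉ H (ℓ + 1 + 1) := by
    intro R hRS hR
    refine hCH.exists_subset_card_le_notMem ?_
    rw [show ℓ + 1 + 1 + 1 = ℓ + 3 by ring]
    refine hfail R hRS ?_
    have hR' : (#S : ℝ) ≤ #R + k * (k + c) := by exact_mod_cast hR
    -- `k (k + c) ≤ (k + 1)² γ n` because `c ≤ 2γn` and `1 ≤ γn`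
    nlinarith [mul_le_mul_of_nonneg_left hc (Nat.cast_nonneg k),
      mul_le_mul_of_nonneg_left hSγ (sq_nonneg (k : ℝ))]
  obtain ⟨Bs, hBsS, -, hBs, hdisj⟩ := exists_pairwise_disjoint_subsets hsmall
  exact (choose_le_card_nonEdges_mul_choose hHelly hCH hBsS hBs hdisj).not_gt
    (mul_choose_lt_choose_add hhk hk hγ hbad (Nat.lt_floor_add_one _))

noncomputable def stabilityBound (k : ℕ) (α : ℝ) : ℝ :=
  1 - (k + 1) ^ 2 * (1 - α) ^ ((k + 1 : ℕ) : ℝ)⁻¹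

lemma stabilityBound_lt_one (k : ℕ) {α : ℝ} (hα : α < 1) : stabilityBound k α < 1 := by
  have := mul_pos (by positivity : (0 : ℝ) < (k + 1) ^ 2)
    (Real.rpow_pos_of_pos (sub_pos.2 hα) ((k + 1 : ℕ) : ℝ)⁻¹)
  unfold stabilityBound
  linarith

lemma tendsto_stabilityBound (k : ℕ) : Tendsto (stabilityBound k) (𝓝 1) (𝓝 1) := by
  have hpos : (0 : ℝ) < ((k + 1 : ℕ) : ℝ)⁻¹ := by positivity
  have hcont : ContinuousAt (stabilityBound k) 1 :=
    continuousAt_const.sub (continuousAt_const.mul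
      ((continuousAt_const.sub continuousAt_id).rpow_const (Or.inr hpos.le)))
  have hone : stabilityBound k 1 = 1 := by
    rw [stabilityBound, sub_self, Real.zero_rpow hpos.ne', mul_zero, sub_zero]
  have hlim := hcont.tendsto
  rwa [hone] at hlim

lemma exists_large_mem_of_density (hHelly : HasHellyNumber H h)
    (hCH : HasColorfulHellyNumber H k) (hhk : h ≤ k) {S : Finset V} {α : ℝ}
    (hα : α ∈ Set.Ioo 0 1)
    (hgood : α * (#S).choose h ≤ ({T | T ⊆ S ∧ #T = h ∧ T ∈ H ℓ} : Set (Finset V)).ncard)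
    (hbad : (nonEdges (H ℓ) S h).Nonempty) :
    ∃ S' ⊆ S, stabilityBound k α * #S ≤ #S' ∧ S' ∈ H (ℓ + 3) := by
  obtain ⟨T, hT⟩ := hbad
  obtain ⟨⟨hTS, hTh⟩, -⟩ := mem_nonEdges.1 hT
  have hsum : (({T | T ⊆ S ∧ #T = h ∧ T ∈ H ℓ} : Set (Finset V)).ncard : ℝ) +
      #(nonEdges (H ℓ) S h) = (#S).choose h := by
    exact_mod_cast ncard_add_card_nonEdges (H ℓ) S h
  have hb1 : (1 : ℝ) ≤ #(nonEdges (H ℓ) S h) := by exact_mod_cast card_pos.2 ⟨T, hT⟩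
  have hbε : (#(nonEdges (H ℓ) S h) : ℝ) ≤ (1 - α) * (#S).choose h := by linarith
  have hh : h ≠ 0 := by
    rintro rfl
    simp only [Nat.choose_zero_right, Nat.cast_one] at hsum hgood
    linarith [hα.1]
  have hS : 1 ≤ #S := (Nat.one_le_iff_ne_zero.2 hh).trans (hTh ▸ card_le_card hTS)
  set γ := (1 - α) ^ ((k + 1 : ℕ) : ℝ)⁻¹
  have hγ : 0 ≤ γ := Real.rpow_nonneg (by linarith [hα.2]) _
  have hγk : γ ^ (k + 1) = 1 - α := Real.rpow_inv_natCast_pow (by linarith [hα.2]) k.succ_ne_zero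
  have hαγ : 1 - α ≤ γ ^ k := by
    rw [← hγk, pow_succ]
    exact mul_le_of_le_one_right (pow_nonneg hγ k) (Real.rpow_le_one (by linarith [hα.2])
      (by linarith [hα.1]) (by positivity))
  have hC : ((#S).choose h : ℝ) ≤ (#S : ℝ) ^ (k + 1) := by
    exact_mod_cast (Nat.choose_le_pow _ _).trans (Nat.pow_le_pow_right hS (by omega))
  have hSγ : 1 ≤ #S * γ := by
    rw [← one_le_pow_iff_of_nonneg (by positivity) k.succ_ne_zero, mul_pow, hγk, mul_comm]
    calc (1 : ℝ) ≤ (1 - α) * (#S).choose h := hb1.trans hbε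
      _ ≤ (1 - α) * #S ^ (k + 1) := by gcongr; linarith [hα.2]
  exact exists_large_mem_of_card_nonEdges_le hHelly hCH hhk (by omega) hγ hSγ
    (hbε.trans (by gcongr))

end Hypergraphs

/-- **Stability of the Helly property for hypergraph chains.** If a hypergraph
chain has Helly Number `h` and Colorful Helly Number `k ≥ h`, then there is a
function `β : (0,1) → [0,1)` with `lim_{α → 1} β α = 1` such that for every
`ℓ ∈ ℤ`, every finite `S ⊆ V` and every `α ∈ (0,1)`: if at least
`α * C(|S|, h)` of the `h`-element subsets of `S` belong to `H ℓ`, then there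
exists `S' ⊆ S` with `|S'| ≥ β α * |S|` and `S' ∈ H (ℓ + 3)`. -/
theorem stability_of_helly_for_chains {V : Type*} [DecidableEq V]
    (H : ℤ → Set (Finset V)) (h k : ℕ) (hhk : h ≤ k)
    (hchain : HypergraphChain H) (hHelly : HasHellyNumber H h)
    (hCH : HasColorfulHellyNumber H k) :
    ∃ β : ℝ → ℝ, (∀ α ∈ Set.Ioo (0 : ℝ) 1, β α ∈ Set.Ico (0 : ℝ) 1) ∧
      Filter.Tendsto β (nhdsWithin 1 (Set.Ioo (0 : ℝ) 1)) (nhds 1) ∧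
      ∀ ℓ : ℤ, ∀ S : Finset V, ∀ α ∈ Set.Ioo (0 : ℝ) 1,
        α * (S.card.choose h : ℝ) ≤
          (({T : Finset V | T ⊆ S ∧ T.card = h ∧ T ∈ H ℓ}).ncard : ℝ) →
        ∃ S' : Finset V, S' ⊆ S ∧ β α * (S.card : ℝ) ≤ (S'.card : ℝ) ∧ S' ∈ H (ℓ + 3) := by
  have hmono : Monotone H := monotone_int_of_le_succ hchain.2
  refine ⟨fun α => max 0 (stabilityBound k α),
    fun α hα => ⟨le_max_left _ _, max_lt one_pos (stabilityBound_lt_one k hα.2)⟩, ?_, ?_⟩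
  · have hmax := (tendsto_const_nhds (x := (0 : ℝ))).max (tendsto_stabilityBound k)
    rw [max_eq_right zero_le_one] at hmax
    exact hmax.mono_left nhdsWithin_le_nhds
  intro ℓ S α hα hgood
  rcases (nonEdges (H ℓ) S h).eq_empty_or_nonempty with hall | hbad
  · refine ⟨S, subset_rfl, ?_, hmono (by omega) (hHelly ℓ S fun T hTS hTh => ?_)⟩
    · exact mul_le_of_le_one_left (Nat.cast_nonneg _)
        (max_le zero_le_one (stabilityBound_lt_one k hα.2).le)
    · by_contra hTH
      exact (eq_empty_iff_forall_notMem.1 hall) T (mem_nonEdges.2 ⟨⟨hTS, hTh⟩, hTH⟩)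
  · obtain ⟨S', hS'S, hS'card, hS'H⟩ := exists_large_mem_of_density hHelly hCH hhk hα hgood hbad
    refine ⟨S', hS'S, ?_, hS'H⟩
    rw [max_mul_of_nonneg _ _ (Nat.cast_nonneg _), zero_mul]
    exact max_le (Nat.cast_nonneg _) hS'card
end

section
/- Let (𝓗_ℓ)_{ℓ∈ℤ} be a hypergraph chain over a base set V with Helly Number h and Colorful Helly Number k. Then for every ℓ ∈ ℤ and every finite subset S ⊆ V, the number of k-element subsets of S that do NOT belong to 𝓗_ℓ is at least C( (|S| − ω_k(𝓗_{ℓ+1}|_S))/k , k ). -/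
/-- `cliqueNum H m S` is `ω_m(H|_S)`: the size of the largest subset `K ⊆ S`
all of whose `m`-element subsets belong to `H`. -/
noncomputable def cliqueNum {V : Type*} (H : Set (Finset V)) (m : ℕ) (S : Finset V) : ℕ :=
  sSup {r : ℕ | ∃ K : Finset V, K ⊆ S ∧ K.card = r ∧ ∀ T ⊆ K, T.card = m → T ∈ H}

/-- The binomial coefficient `C(x, m)` for a real argument `x`: it is `0` when
`x < m`, and otherwise given by the usual falling-factorial expression. -/
noncomputable def realChoose (x : ℝ) (m : ℕ) : ℝ :=
  if x < m then 0 else (∏ j ∈ Finset.range m, (x - j)) / (m.factorial : ℝ)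

/-!
Choose greedily a family `D` of pairwise disjoint `k`-subsets of `S` outside `H (ℓ + 1)`, maximal
for this property. Every `k`-subset of what `D` leaves uncovered lies in `H (ℓ + 1)`, so
`|S| ≤ ω_k(H (ℓ + 1)|_S) + k |D|`. Any `k` members of `D`, taken as color classes, are outside
`H (ℓ + 1)`, so the Colorful Helly property yields a colorful selection outside `H ℓ`. By
disjointness it is a `k`-set meeting exactly the chosen members of `D`, so different choices give
different non-edges of `H ℓ`, and there are at least `C(|D|, k)` of them.
-/

open Finset

lemma realChoose_mono {m : ℕ} {x y : ℝ} (hxy : x ≤ y) :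
    realChoose x m ≤ realChoose y m := by
  unfold realChoose
  split_ifs with hx hy hy
  · exact le_rfl
  · refine div_nonneg (prod_nonneg fun j hj => ?_) (by positivity)
    have hj' : (j : ℝ) < m := by exact_mod_cast mem_range.mp hj
    linarith [not_lt.mp hy]
  · exact absurd (hxy.trans_lt hy) hx
  · refine div_le_div_of_nonneg_right (prod_le_prod (fun j hj => ?_) fun j _ => by linarith)
      (by positivity)
    have hj' : (j : ℝ) < m := by exact_mod_cast mem_range.mp hj
    linarith [not_lt.mp hx]

lemma realChoose_natCast (t m : ℕ) : realChoose (t : ℝ) m = (t.choose m : ℝ) := by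
  unfold realChoose
  split_ifs with hlt
  · rw [Nat.choose_eq_zero_of_lt (by exact_mod_cast hlt), Nat.cast_zero]
  · have hmt : m ≤ t := by exact_mod_cast not_lt.mp hlt
    have hprod : ∏ j ∈ range m, ((t : ℝ) - j) = (t.descFactorial m : ℝ) := by
      rw [Nat.descFactorial_eq_prod_range, Nat.cast_prod]
      exact prod_congr rfl fun j hj => (Nat.cast_sub ((mem_range.mp hj).le.trans hmt)).symm
    rw [hprod, Nat.descFactorial_eq_factorial_mul_choose, Nat.cast_mul,
      mul_div_cancel_left₀ _ (by exact_mod_cast m.factorial_ne_zero)]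

lemma card_le_cliqueNum {V : Type*} {Hs : Set (Finset V)} {m : ℕ} {S K : Finset V} (hKS : K ⊆ S)
    (hK : ∀ T ⊆ K, T.card = m → T ∈ Hs) : K.card ≤ cliqueNum Hs m S :=
  le_csSup ⟨S.card, by rintro _ ⟨L, hLS, rfl, -⟩; exact card_le_card hLS⟩ ⟨K, hKS, rfl, hK⟩

section

variable {V : Type*} [DecidableEq V]

lemma exists_pairwiseDisjoint_forall_sdiff_not {P : Finset V → Prop}
    (hP : ∀ T, P T → T.Nonempty) (S : Finset V) :
    ∃ D : Finset (Finset V), (∀ A ∈ D, A ⊆ S ∧ P A) ∧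
      (D : Set (Finset V)).PairwiseDisjoint id ∧ ∀ T ⊆ S \ D.biUnion id, ¬ P T := by
  induction S using Finset.strongInduction with
  | H S ih =>
    by_cases hex : ∃ T ⊆ S, P T
    · obtain ⟨T, hTS, hT⟩ := hex
      obtain ⟨D, hDS, hD, hmax⟩ := ih (S \ T) (sdiff_ssubset hTS (hP T hT))
      refine ⟨insert T D, ?_, ?_, fun U hU => hmax U ?_⟩
      · simp only [forall_mem_insert]
        exact ⟨⟨hTS, hT⟩, fun A hA => ⟨(hDS A hA).1.trans sdiff_subset, (hDS A hA).2⟩⟩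
      · rw [coe_insert]
        exact hD.insert fun A hA _ => disjoint_of_subset_right (hDS A hA).1 disjoint_sdiff
      · rwa [biUnion_insert, id, sdiff_union_distrib, ← Finset.sdiff_sdiff_left'] at hU
    · push Not at hex
      exact ⟨∅, by simp, by simp, fun T hT => hex T (by simpa using hT)⟩

lemma exists_pairwiseDisjoint_card_le_cliqueNum_add (Hs : Set (Finset V)) {k : ℕ} (hk : 0 < k)
    (S : Finset V) :
    ∃ D : Finset (Finset V), (∀ A ∈ D, A ⊆ S ∧ A ∉ Hs) ∧
      (D : Set (Finset V)).PairwiseDisjoint id ∧ S.card ≤ cliqueNum Hs k S + k * D.card := by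
  obtain ⟨D, hDS, hD, hmax⟩ := exists_pairwiseDisjoint_forall_sdiff_not
    (P := fun T => T.card = k ∧ T ∉ Hs) (fun T hT => card_pos.mp (hT.1 ▸ hk)) S
  refine ⟨D, fun A hA => ⟨(hDS A hA).1, (hDS A hA).2.2⟩, hD, ?_⟩
  have hrest : (S \ D.biUnion id).card ≤ cliqueNum Hs k S :=
    card_le_cliqueNum sdiff_subset fun T hT hTk => not_not.mp fun hTH => hmax T hT ⟨hTk, hTH⟩
  have hcover : (D.biUnion id).card ≤ k * D.card := by
    rw [mul_comm]
    exact card_biUnion_le_card_mul D id k fun A hA => (hDS A hA).2.1.le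
  exact card_le_card_sdiff_add_card.trans (add_le_add hrest hcover)

lemma filter_not_disjoint_eq {D I : Finset (Finset V)} {F : Finset V}
    (hD : (D : Set (Finset V)).PairwiseDisjoint id) (hID : I ⊆ D)
    (hFI : F ⊆ I.biUnion id) (hIF : ∀ A ∈ I, ¬ Disjoint A F) :
    D.filter (fun A => ¬ Disjoint A F) = I := by
  ext A
  simp only [mem_filter]
  refine ⟨fun ⟨hAD, hAF⟩ => ?_, fun hAI => ⟨hID hAI, hIF A hAI⟩⟩
  obtain ⟨x, hxA, hxF⟩ := not_disjoint_iff.mp hAF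
  obtain ⟨B, hBI, hxB⟩ := mem_biUnion.mp (hFI hxF)
  by_contra hAI
  exact not_disjoint_iff.mpr ⟨x, hxA, hxB⟩ (hD hAD (hID hBI) (ne_of_mem_of_not_mem hBI hAI).symm)

namespace HasColorfulHellyNumber

variable {H : ℤ → Set (Finset V)} {k : ℕ}

lemma exists_transversal_notMem (hCH : HasColorfulHellyNumber H k) (ℓ : ℤ)
    {I : Finset (Finset V)} (hIk : I.card = k) (hIH : ∀ A ∈ I, A ∉ H (ℓ + 1))
    (hI : (I : Set (Finset V)).PairwiseDisjoint id) :
    ∃ F ⊆ I.biUnion id, F.card = k ∧ F ∉ H ℓ ∧ ∀ A ∈ I, ¬ Disjoint A F := by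
  set e : Fin k ≃ I := (I.equivFinOfCardEq hIk).symm
  obtain ⟨φ, hφe, hφH⟩ : ∃ φ : Fin k → V, (∀ i, φ i ∈ (e i : Finset V)) ∧ image φ univ ∉ H ℓ := by
    by_contra! hall
    obtain ⟨j, hj⟩ := hCH ℓ (fun i => e i) hall
    exact hIH _ (e j).2 hj
  have hφ : Function.Injective φ := by
    intro i j hij
    by_contra hne
    have hdisj := hI (e i).2 (e j).2 (Subtype.coe_injective.ne (e.injective.ne hne))
    exact disjoint_left.mp hdisj (hφe i) (hij ▸ hφe j)
  refine ⟨image φ univ, ?_, ?_, hφH, fun A hA => ?_⟩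
  · intro x hx
    obtain ⟨i, -, rfl⟩ := mem_image.mp hx
    exact mem_biUnion.mpr ⟨e i, (e i).2, hφe i⟩
  · rw [card_image_of_injective _ hφ, card_univ, Fintype.card_fin]
  · obtain ⟨i, hi⟩ := e.surjective ⟨A, hA⟩
    refine not_disjoint_iff.mpr ⟨φ i, ?_, mem_image_of_mem _ (mem_univ i)⟩
    simpa [hi] using hφe i

lemma choose_card_le_ncard_notMem (hCH : HasColorfulHellyNumber H k) (ℓ : ℤ)
    {S : Finset V} {D : Finset (Finset V)} (hDS : ∀ A ∈ D, A ⊆ S)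
    (hDH : ∀ A ∈ D, A ∉ H (ℓ + 1)) (hD : (D : Set (Finset V)).PairwiseDisjoint id) :
    D.card.choose k ≤ {T : Finset V | T ⊆ S ∧ T.card = k ∧ T ∉ H ℓ}.ncard := by
  classical
  have hbad : {T : Finset V | T ⊆ S ∧ T.card = k ∧ T ∉ H ℓ} =
      ↑((S.powersetCard k).filter (· ∉ H ℓ)) := by
    ext T
    simp [and_assoc]
  rw [hbad, Set.ncard_coe_finset, ← card_powersetCard]
  refine card_le_card_of_surjOn (fun F => D.filter (fun A => ¬ Disjoint A F)) fun I hI => ?_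
  rw [mem_coe, mem_powersetCard] at hI
  obtain ⟨F, hFI, hFk, hFH, hIF⟩ := hCH.exists_transversal_notMem ℓ hI.2
    (fun A hA => hDH A (hI.1 hA)) (hD.subset (coe_subset.mpr hI.1))
  have hFS : F ⊆ S := hFI.trans (biUnion_subset.mpr fun A hA => hDS A (hI.1 hA))
  exact ⟨F, by simp [hFS, hFk, hFH], filter_not_disjoint_eq hD hI.1 hFI hIF⟩

end HasColorfulHellyNumber

end

theorem kim_lemma_part_a_general {V : Type*} [DecidableEq V]
    (H : ℤ → Set (Finset V)) (k : ℕ)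
    (hCH : HasColorfulHellyNumber H k) :
    ∀ ℓ : ℤ, ∀ S : Finset V,
      realChoose (((S.card : ℝ) - (cliqueNum (H (ℓ + 1)) k S : ℝ)) / k) k ≤
        (({T : Finset V | T ⊆ S ∧ T.card = k ∧ T ∉ H ℓ}).ncard : ℝ) := by
  intro ℓ S
  obtain ⟨D, hD, hDdisj, hSD⟩ : ∃ D : Finset (Finset V), (∀ A ∈ D, A ⊆ S ∧ A ∉ H (ℓ + 1)) ∧
      (D : Set (Finset V)).PairwiseDisjoint id ∧
      ((S.card : ℝ) - cliqueNum (H (ℓ + 1)) k S) / k ≤ D.card := by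
    rcases k.eq_zero_or_pos with rfl | hk
    -- for `k = 0` the left-hand side is a division by zero, hence `0`
    · exact ⟨∅, by simp, by simp, by simp⟩
    · obtain ⟨D, hD, hDdisj, hSD⟩ := exists_pairwiseDisjoint_card_le_cliqueNum_add (H (ℓ + 1)) hk S
      refine ⟨D, hD, hDdisj, ?_⟩
      have hSD' : (S.card : ℝ) ≤ cliqueNum (H (ℓ + 1)) k S + k * D.card := by exact_mod_cast hSD
      rw [div_le_iff₀ (by exact_mod_cast hk)]
      linarith
  calc realChoose _ k ≤ realChoose D.card k := realChoose_mono hSD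
    _ = D.card.choose k := realChoose_natCast _ _
    _ ≤ _ := by
      exact_mod_cast hCH.choose_card_le_ncard_notMem ℓ (fun A hA => (hD A hA).1)
        (fun A hA => (hD A hA).2) hDdisj

/-- **Lemma (kim), part (a).** If the hypergraph chain `(H ℓ)` has Helly Number
`h` and Colorful Helly Number `k`, then for every `ℓ ∈ ℤ` and every finite
`S ⊆ V`, the number of `k`-element subsets of `S` not belonging to `H ℓ` is at
least `C((|S| - ω_k(H (ℓ+1)|_S)) / k, k)`. -/
theorem kim_lemma_part_a {V : Type*} [DecidableEq V]
    (H : ℤ → Set (Finset V)) (h k : ℕ)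
    (hchain : HypergraphChain H) (hHelly : HasHellyNumber H h)
    (hCH : HasColorfulHellyNumber H k) :
    ∀ ℓ : ℤ, ∀ S : Finset V,
      realChoose (((S.card : ℝ) - (cliqueNum (H (ℓ + 1)) k S : ℝ)) / k) k ≤
        (({T : Finset V | T ⊆ S ∧ T.card = k ∧ T ∉ H ℓ}).ncard : ℝ) :=
  kim_lemma_part_a_general H k hCH
end

section
/- If 𝓒_1, …, 𝓒_{d+1} are finite families (color classes) of convex sets in ℝ^d such that for any colorful selection C_1 ∈ 𝓒_1, …, C_{d+1} ∈ 𝓒_{d+1} the intersection C_1 ∩ … ∩ C_{d+1} is nonempty, then for some index j with 1 ≤ j ≤ d+1, the intersection of all members of 𝓒_j is also nonempty. -/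
/-!
Shrink every member of a color class to the convex hull of finitely many witness points of the
colorful intersections, so that all sets become compact. Fix a continuous strictly convex `Q`, and
among all colorful selections take one whose intersection has the largest minimum value of `Q`,
attained at `z`. By Helly's theorem applied to these `d + 1` sets and the sublevel set
`{Q < Q z}`, already `d` of the selected sets have `z` as minimizer of `Q` on their intersection.
For the remaining color `j` and any `C` in it, swapping `C` into the selection yields a minimizer
`w` with `Q w ≤ Q z` lying in the intersection of those `d` sets, so `w = z` by strict convexity,
and `z ∈ C`.
-/

open Set Finset Module

theorem exists_card_le_finrank_isMinOn {ι E : Type*} [Fintype ι] [AddCommGroup E] [Module ℝ E]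
    [FiniteDimensional ℝ E] {Q : E → ℝ} (hQ : ConvexOn ℝ univ Q) {F : ι → Set E}
    (hF : ∀ i, Convex ℝ (F i)) {z : E} (hz : z ∈ ⋂ i, F i) (hmin : IsMinOn Q (⋂ i, F i) z) :
    ∃ J : Finset ι, #J ≤ finrank ℝ E ∧ IsMinOn Q (⋂ i ∈ J, F i) z := by
  classical
  let G : Option ι → Set E := fun o ↦ o.elim {x | Q x < Q z} F
  have hG : ∀ o ∈ (Finset.univ : Finset (Option ι)), Convex ℝ (G o) := by
    rintro (_ | i) -
    · simpa [G] using hQ.convex_lt (Q z)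
    · exact hF i
  have hG_empty : ¬ (⋂ o ∈ (Finset.univ : Finset (Option ι)), G o).Nonempty := by
    rintro ⟨x, hx⟩
    simp only [Finset.mem_univ, iInter_true, mem_iInter, Option.forall] at hx
    have hlt : Q x < Q z := hx.1
    exact (hmin (mem_iInter.2 hx.2)).not_gt hlt
  obtain ⟨I, -, hI_card, hI_empty⟩ : ∃ I ⊆ Finset.univ, #I ≤ finrank ℝ E + 1 ∧
      ¬ (⋂ o ∈ I, G o).Nonempty := by
    by_contra! h
    exact hG_empty (Convex.helly_theorem' hG h)
  have hI_none : none ∈ I := by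
    by_contra h
    refine hI_empty ⟨z, mem_iInter₂.2 fun o ho ↦ ?_⟩
    cases o with
    | none => exact absurd ho h
    | some i => exact mem_iInter.1 hz i
  refine ⟨eraseNone I, by rw [card_eraseNone_of_mem hI_none]; omega,
    isMinOn_iff.2 fun x hx ↦ ?_⟩
  by_contra! hlt
  refine hI_empty ⟨x, mem_iInter₂.2 fun o ho ↦ ?_⟩
  cases o with
  | none => exact hlt
  | some i => exact mem_iInter₂.1 hx i (mem_eraseNone.2 ho)

section

variable {ι E : Type*} [AddCommGroup E] [Module ℝ E] [TopologicalSpace E]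
  [IsTopologicalAddGroup E] [ContinuousSMul ℝ E]

def ColorfulIntersecting (𝓒 : ι → Finset (Set E)) : Prop :=
  ∀ φ : ι → Set E, (∀ i, φ i ∈ 𝓒 i) → (⋂ i, φ i).Nonempty

theorem ColorfulIntersecting.exists_convex_compact_shrinking [Finite ι]
    {𝓒 : ι → Finset (Set E)} (hconv : ∀ i, ∀ C ∈ 𝓒 i, Convex ℝ C)
    (h𝓒 : ColorfulIntersecting 𝓒) :
    ∃ 𝓓 : ι → Finset (Set E), ColorfulIntersecting 𝓓 ∧
      (∀ i, ∀ D ∈ 𝓓 i, Convex ℝ D ∧ IsCompact D) ∧ ∀ i, ⋂ D ∈ 𝓓 i, D ⊆ ⋂ C ∈ 𝓒 i, C := by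
  classical
  choose! p hp using h𝓒
  let S := univ.pi fun i ↦ (𝓒 i : Set (Set E))
  let D : ι → Set E → Set E := fun i C ↦ convexHull ℝ (p '' {φ ∈ S | φ i = C})
  have hD_sub : ∀ i, ∀ C ∈ 𝓒 i, D i C ⊆ C := by
    refine fun i C hC ↦ convexHull_min ?_ (hconv i C hC)
    rintro _ ⟨φ, ⟨hφ, rfl⟩, rfl⟩
    exact mem_iInter.1 (hp φ fun j ↦ hφ j trivial) i
  refine ⟨fun i ↦ (𝓒 i).image (D i), fun ψ hψ ↦ ?_, fun i _ hD ↦ ?_, fun i x hx ↦ ?_⟩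
  · choose φ hφ hφψ using fun i ↦ Finset.mem_image.1 (hψ i)
    refine ⟨p φ, mem_iInter.2 fun i ↦ hφψ i ▸ subset_convexHull ℝ _ ?_⟩
    exact ⟨φ, ⟨fun j _ ↦ hφ j, rfl⟩, rfl⟩
  · obtain ⟨C, -, rfl⟩ := Finset.mem_image.1 hD
    exact ⟨convex_convexHull ℝ _,
      ((Set.Finite.pi fun i ↦ (𝓒 i).finite_toSet).sep _).image p |>.isCompact_convexHull ℝ⟩
  · simp only [mem_iInter, Finset.mem_image, forall_exists_index, and_imp] at hx ⊢
    exact fun C hC ↦ hD_sub i C hC (hx _ C hC rfl)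

variable [T2Space E] [FiniteDimensional ℝ E]

variable (E) in
theorem exists_strictConvexOn_continuous : ∃ Q : E → ℝ, StrictConvexOn ℝ univ Q ∧ Continuous Q := by
  have hsq : StrictConvexOn ℝ univ (fun y : EuclideanSpace ℝ (Fin (finrank ℝ E)) ↦ ‖y‖ ^ 2) :=
    (strongConvexOn_iff_convex (m := 2).2 (by simpa using convexOn_const 0 convex_univ)).strictConvexOn
      two_pos
  refine ⟨fun x ↦ ‖toEuclidean x‖ ^ 2, ⟨convex_univ, fun x _ y _ hxy a b ha hb hab ↦ ?_⟩, by fun_prop⟩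
  simpa only [map_add, map_smul] using
    hsq.2 (mem_univ _) (mem_univ _) (toEuclidean.injective.ne hxy) ha hb hab

theorem ColorfulIntersecting.exists_nonempty_biInter_of_isCompact [Fintype ι]
    (hι : finrank ℝ E < Fintype.card ι) {𝓒 : ι → Finset (Set E)}
    (hconv : ∀ i, ∀ C ∈ 𝓒 i, Convex ℝ C) (hcpt : ∀ i, ∀ C ∈ 𝓒 i, IsCompact C)
    (h𝓒 : ColorfulIntersecting 𝓒) : ∃ j, (⋂ C ∈ 𝓒 j, C).Nonempty := by
  classical
  by_cases hempty : ∃ j, 𝓒 j = ∅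
  · obtain ⟨j, hj⟩ := hempty
    exact ⟨j, by simp [hj]⟩
  push Not at hempty
  obtain ⟨Q, hQ, hQc⟩ := exists_strictConvexOn_continuous E
  have : Nonempty ι := Fintype.card_pos_iff.1 (Nat.zero_lt_of_lt hι)
  let S := univ.pi fun i ↦ (𝓒 i : Set (Set E))
  have hS : S.Finite := Set.Finite.pi fun i ↦ (𝓒 i).finite_toSet
  have hS_ne : S.Nonempty := univ_pi_nonempty_iff.2 fun i ↦ Finset.coe_nonempty.2 (hempty i)
  have hmin : ∀ φ ∈ S, ∃ z ∈ ⋂ i, φ i, IsMinOn Q (⋂ i, φ i) z := by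
    intro φ hφ
    have hK : IsCompact (⋂ i, φ i) :=
      (hcpt _ _ (hφ (Classical.arbitrary ι) trivial)).of_isClosed_subset
        (isClosed_iInter fun i ↦ (hcpt i _ (hφ i trivial)).isClosed) (iInter_subset _ _)
    exact hK.exists_isMinOn (h𝓒 φ fun i ↦ hφ i trivial) hQc.continuousOn
  choose! n hn hn_min using hmin
  obtain ⟨φ, hφ, hφ_max⟩ := S.exists_max_image (Q ∘ n) hS hS_ne
  obtain ⟨J, hJ_card, hJ_min⟩ := exists_card_le_finrank_isMinOn hQ.convexOn
    (fun i ↦ hconv i _ (hφ i trivial)) (hn φ hφ) (hn_min φ hφ)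
  obtain ⟨j, -, hjJ⟩ := Finset.exists_mem_notMem_of_card_lt_card
    (hJ_card.trans_lt (hι.trans_eq Finset.card_univ.symm))
  refine ⟨j, n φ, mem_iInter₂.2 fun C hC ↦ ?_⟩
  set ψ := Function.update φ j C
  have hψ : ψ ∈ S := by
    intro i _
    rcases eq_or_ne i j with rfl | hij
    · simpa [ψ] using hC
    · simpa [ψ, hij] using hφ i trivial
  have hψJ : n ψ ∈ ⋂ i ∈ J, φ i := by
    refine mem_iInter₂.2 fun i hi ↦ ?_
    simpa [ψ, Function.update_of_ne (ne_of_mem_of_not_mem hi hjJ)] using mem_iInter.1 (hn ψ hψ) i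
  have hφJ : n φ ∈ ⋂ i ∈ J, φ i := mem_iInter₂.2 fun i _ ↦ mem_iInter.1 (hn φ hφ) i
  have hJ_conv : Convex ℝ (⋂ i ∈ J, φ i) := convex_iInter₂ fun i _ ↦ hconv i _ (hφ i trivial)
  have heq : n ψ = n φ := (hQ.subset (subset_univ _) hJ_conv).eq_of_isMinOn
    (isMinOn_iff.2 fun x hx ↦ (hφ_max ψ hψ).trans (hJ_min hx)) hJ_min hψJ hφJ
  simpa [ψ, heq] using mem_iInter.1 (hn ψ hψ) j

theorem ColorfulIntersecting.exists_nonempty_biInter [Fintype ι]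
    (hι : finrank ℝ E < Fintype.card ι) {𝓒 : ι → Finset (Set E)}
    (hconv : ∀ i, ∀ C ∈ 𝓒 i, Convex ℝ C) (h𝓒 : ColorfulIntersecting 𝓒) :
    ∃ j, (⋂ C ∈ 𝓒 j, C).Nonempty := by
  obtain ⟨𝓓, h𝓓, h𝓓_cc, h𝓓_sub⟩ := h𝓒.exists_convex_compact_shrinking hconv
  obtain ⟨j, hj⟩ := h𝓓.exists_nonempty_biInter_of_isCompact hι
    (fun i D hD ↦ (h𝓓_cc i D hD).1) (fun i D hD ↦ (h𝓓_cc i D hD).2)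
  exact ⟨j, hj.mono (h𝓓_sub j)⟩

end

/-- **Colorful Helly Theorem (Lovász; Bárány).** If `𝓒_1, …, 𝓒_{d+1}` are
finite families (color classes) of convex sets in `ℝ^d` such that every
colorful selection `C_1 ∈ 𝓒_1, …, C_{d+1} ∈ 𝓒_{d+1}` has nonempty
intersection, then for some `j` the intersection of all members of `𝓒_j` is
nonempty. -/
theorem colorful_helly (d : ℕ)
    (𝓒 : Fin (d + 1) → Finset (Set (Fin d → ℝ)))
    (hconv : ∀ i, ∀ C ∈ 𝓒 i, Convex ℝ C)
    (hsel : ∀ φ : Fin (d + 1) → Set (Fin d → ℝ), (∀ i, φ i ∈ 𝓒 i) →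
      (⋂ i, φ i).Nonempty) :
    ∃ j : Fin (d + 1), (⋂ C ∈ 𝓒 j, C).Nonempty :=
  ColorfulIntersecting.exists_nonempty_biInter (by simp) hconv hsel
end
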